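/- arXiv:2407.04320 — 5 statements merged into one kernel-verified Lean document; each statement's English description precedes it below -/
import Mathlib

section
/- For 0 < ε < 1/2, setting θ = 1 - (1/(2ε))·(1 - √((1-2ε)² + 4ε²)), the tuple v̄ = ε, w̄ = ε - εθ, c̄_1 = εθ, c̄_i = (1-θ)^{i-1}·c̄_1 is a steady state of the rescaled system: it satisfies -v̄w̄ + v̄(ε - c̄_1) = 0, v̄w̄ - εw̄ = 0, w̄c̄_j - v̄c̄_{j+1} = w̄c̄_{j-1} - v̄c̄_j for all j ≥ 2, w̄c̄_1 = v̄c̄_2, and the constraint ∑_{i≥1} c̄_i = ε; moreover 0 < θ < 1. -/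
/-- For `0 < ε < 1/2`, the tuple `v̄ = ε`, `w̄ = ε - εθ`, `c̄_1 = εθ`,
`c̄_i = (1-θ)^(i-1) c̄_1` is a positive steady state of the rescaled system. -/
theorem stmt2
    (ε : ℝ) (hε : 0 < ε) (hε' : ε < 1 / 2)
    (θ : ℝ) (hθ : θ = 1 - (1 / (2 * ε)) * (1 - Real.sqrt ((1 - 2 * ε) ^ 2 + 4 * ε ^ 2)))
    (vbar wbar : ℝ) (hv : vbar = ε) (hw : wbar = ε - ε * θ)
    (cbar : ℕ → ℝ) (hc : ∀ i, 1 ≤ i → cbar i = (1 - θ) ^ (i - 1) * (ε * θ)) :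
    0 < θ ∧ θ < 1 ∧
    (-(vbar * wbar) + vbar * (ε - cbar 1) = 0) ∧
    (vbar * wbar - ε * wbar = 0) ∧
    (wbar * cbar 1 = vbar * cbar 2) ∧
    (∀ j, 2 ≤ j → wbar * cbar j - vbar * cbar (j + 1) = wbar * cbar (j - 1) - vbar * cbar j) ∧
    (∑' i : ℕ, cbar (i + 1)) = ε := by
  set A : ℝ := (1 - 2 * ε) ^ 2 + 4 * ε ^ 2 with hA
  have hA0 : 0 ≤ A := by positivity
  have h2e : (0:ℝ) < 1 - 2 * ε := by linarith
  have hs_gt : 1 - 2 * ε < Real.sqrt A := by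
    rw [show (1 - 2*ε) = Real.sqrt ((1-2*ε)^2) by
      rw [Real.sqrt_sq h2e.le]]
    apply Real.sqrt_lt_sqrt (by positivity)
    nlinarith
  have hs_lt : Real.sqrt A < 1 := by
    rw [show (1:ℝ) = Real.sqrt 1 by simp]
    apply Real.sqrt_lt_sqrt hA0
    nlinarith
  have hθpos : 0 < θ := by
    rw [hθ]
    have : (1 - Real.sqrt A) / (2*ε) < 1 := by
      rw [div_lt_one (by linarith)]
      linarith
    rw [div_eq_mul_inv, mul_comm] at this
    rw [one_div]
    linarith
  have hθlt : θ < 1 := by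
    rw [hθ]
    have h1 : 0 < 1 - Real.sqrt A := by linarith
    have : 0 < (1/(2*ε)) * (1 - Real.sqrt A) := by positivity
    linarith
  have hr0 : (0:ℝ) ≤ 1 - θ := by linarith
  have hr1 : 1 - θ < 1 := by linarith
  have hc1 : cbar 1 = ε * θ := by simpa using hc 1 le_rfl
  have hc2 : cbar 2 = (1 - θ) * (ε * θ) := by simpa using hc 2 (by norm_num)
  refine ⟨hθpos, hθlt, ?_, ?_, ?_, ?_, ?_⟩
  · rw [hv, hw, hc1]; ring
  · rw [hv]; ring
  · rw [hv, hw, hc1, hc2]; ring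
  · intro j hj
    obtain ⟨k, rfl⟩ : ∃ k, j = k + 2 := ⟨j - 2, by omega⟩
    have h1 := hc (k+1) (by omega)
    have h2 := hc (k+2) (by omega)
    have h3 := hc (k+3) (by omega)
    simp only [Nat.add_sub_cancel, show k+2-1=k+1 from rfl, show k+3-1=k+2 from rfl] at h1 h2 h3
    rw [hv, hw, show k+2-1 = k+1 from rfl, show k+2+1 = k+3 from rfl, h1, h2, h3,
      pow_succ, pow_succ]
    ring
  · have hcs : ∀ i : ℕ, cbar (i + 1) = (1 - θ) ^ i * (ε * θ) := by
      intro i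
      rw [hc (i+1) (by omega)]
      simp
    rw [tsum_congr hcs, tsum_mul_right, tsum_geometric_of_lt_one hr0 hr1]
    field_simp
    rw [sub_sub_cancel, div_self hθpos.ne']
end

section
/- Along solutions of the rescaled system dv/dt = -vw + v(ε - c_1), dw/dt = vw - εw (with v, w > 0), the Lotka–Volterra energy E = v + w - 2ε - ε·log(vw/ε²) satisfies dE/dt = (ε - v)·c_1. -/
/-- Along solutions of the rescaled system, the Lotka–Volterra energy
`E = v + w - 2ε - ε log(vw/ε²)` satisfies `dE/dt = (ε - v) c₁`. -/
theorem stmt4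
    (ε : ℝ) (hε : 0 < ε)
    (v w c₁ : ℝ → ℝ)
    (hvpos : ∀ t, 0 < v t) (hwpos : ∀ t, 0 < w t)
    (hv : ∀ t, HasDerivAt v (-(v t * w t) + v t * (ε - c₁ t)) t)
    (hw : ∀ t, HasDerivAt w (v t * w t - ε * w t) t) :
    ∀ t, HasDerivAt
      (fun s => v s + w s - 2 * ε - ε * Real.log (v s * w s / ε ^ 2))
      ((ε - v t) * c₁ t) t := by
  intro t
  have hv' := hv t
  have hw' := hw t
  have hlogv : HasDerivAt (fun s => Real.log (v s))
      ((-(v t * w t) + v t * (ε - c₁ t)) / v t) t := hv'.log (hvpos t).ne'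
  have hlogw : HasDerivAt (fun s => Real.log (w s))
      ((v t * w t - ε * w t) / w t) t := hw'.log (hwpos t).ne'
  have hfun : (fun s => v s + w s - 2 * ε - ε * Real.log (v s * w s / ε ^ 2)) =
      (fun s => v s + w s - 2 * ε -
        ε * (Real.log (v s) + Real.log (w s) - Real.log (ε ^ 2))) := by
    funext s
    rw [Real.log_div (mul_pos (hvpos s) (hwpos s)).ne' (pow_pos hε 2).ne',
        Real.log_mul (hvpos s).ne' (hwpos s).ne']
  rw [hfun]
  have H := ((hv'.add hw').sub_const (2 * ε)).sub
    ((((hlogv.add hlogw).sub_const (Real.log (ε ^ 2)))).const_mul ε)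
  convert H using 1
  case e'_4 => rfl
  case e'_5 => rfl
  case e'_8 => rfl
  have e1 : (-(v t * w t) + v t * (ε - c₁ t)) / v t = -(w t) + (ε - c₁ t) := by
    field_simp [(hvpos t).ne']
  have e2 : (v t * w t - ε * w t) / w t = v t - ε := by
    field_simp [(hwpos t).ne']
  rw [e1, e2]
  ring
end

section
/- The energy of the positive steady state, Ē = v̄ + w̄ - 2ε - ε·log(v̄w̄/ε²) with v̄ = ε and w̄ = ε - c̄_1, equals -c̄_1 - ε·log(1 - c̄_1/ε), and as ε → 0⁺ (with c̄_1 = εθ, θ ~ ε) one has Ē ~ ε³/2. -/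
open scoped Topology
open Set Filter Real

set_option maxHeartbeats 1000000

private lemma key_lhopital :
    Filter.Tendsto (fun t : ℝ => (-t - Real.log (1 - t)) / (t ^ 2 / 2))
      (𝓝[>] (0:ℝ)) (𝓝 1) := by
  have hderiv : ∀ x ∈ Ioo (0:ℝ) (1/2),
      HasDerivAt (fun t : ℝ => -t - Real.log (1 - t)) (-1 - (-1)/(1 - x)) x := by
    intro x hx
    have h1 : HasDerivAt (fun t : ℝ => 1 - t) (-1) x := by
      simpa using (hasDerivAt_id x).const_sub 1
    have h2 := h1.log (by nlinarith [hx.1, hx.2] : (1:ℝ) - x ≠ 0)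
    exact ((hasDerivAt_id x).neg).sub h2
  have hgderiv : ∀ x ∈ Ioo (0:ℝ) (1/2),
      HasDerivAt (fun t : ℝ => t ^ 2 / 2) x x := by
    intro x _
    have := (hasDerivAt_pow 2 x).div_const 2
    exact this.congr_deriv (by norm_num)
  refine HasDerivAt.lhopital_zero_right_on_Ioo (by norm_num : (0:ℝ) < 1/2)
    hderiv hgderiv (fun x hx => ne_of_gt hx.1) ?_ ?_ ?_
  · have hc : ContinuousAt (fun t : ℝ => -t - Real.log (1 - t)) 0 := by
      have : ContinuousAt (fun t : ℝ => Real.log (1 - t)) 0 := by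
        have := (Real.continuousAt_log (by norm_num : (1:ℝ) - 0 ≠ 0)).comp
          ((continuousAt_const.sub continuousAt_id) : ContinuousAt (fun t : ℝ => 1 - t) 0)
        exact this
      exact (continuousAt_id.neg).sub this
    have := hc.tendsto.mono_left (nhdsWithin_le_nhds (s := Set.Ioi (0:ℝ)))
    simpa using this
  · have : Filter.Tendsto (fun t : ℝ => t ^ 2 / 2) (𝓝 0) (𝓝 ((0:ℝ)^2/2)) := by
      exact (continuous_pow 2).div_const 2 |>.tendsto 0
    have := this.mono_left (nhdsWithin_le_nhds (s := Set.Ioi (0:ℝ)))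
    simpa using this
  · have hev : ∀ᶠ x in 𝓝[>] (0:ℝ), (-1 - (-1)/(1 - x)) / x = 1/(1-x) := by
      filter_upwards [Ioo_mem_nhdsGT_of_mem (by norm_num : (0:ℝ) ∈ Ico (0:ℝ) (1/2))]
        with x hx
      have hx0 : x ≠ 0 := ne_of_gt hx.1
      have hx1 : (1:ℝ) - x ≠ 0 := by nlinarith [hx.1, hx.2]
      field_simp
      ring
    have hlim : Filter.Tendsto (fun x : ℝ => 1/(1-x)) (𝓝[>] (0:ℝ)) (𝓝 1) := by
      have : Filter.Tendsto (fun x : ℝ => 1/(1-x)) (𝓝 0) (𝓝 (1/(1-0))) := by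
        apply Filter.Tendsto.div tendsto_const_nhds
        · exact (continuous_const.sub continuous_id).tendsto 0
        · norm_num
      have := this.mono_left (nhdsWithin_le_nhds (s := Set.Ioi (0:ℝ)))
      simpa using this
    exact hlim.congr' (by filter_upwards [hev] with x h using h.symm)

/-- The steady-state energy `Ē = v̄ + w̄ - 2ε - ε log(v̄ w̄ / ε²)` equals
`-c̄₁ - ε log(1 - c̄₁/ε)` and satisfies `Ē ~ ε³/2` as `ε → 0⁺`. -/
theorem stmt5
    (θ c₁bar vbar wbar Ebar : ℝ → ℝ)
    (hθ : ∀ ε : ℝ, θ ε = 1 - (1 / (2 * ε)) * (1 - Real.sqrt ((1 - 2 * ε) ^ 2 + 4 * ε ^ 2)))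
    (hc₁ : ∀ ε, c₁bar ε = ε * θ ε)
    (hv : ∀ ε, vbar ε = ε) (hw : ∀ ε, wbar ε = ε - c₁bar ε)
    (hE : ∀ ε, Ebar ε =
      vbar ε + wbar ε - 2 * ε - ε * Real.log (vbar ε * wbar ε / ε ^ 2)) :
    (∀ ε ∈ Set.Ioo (0 : ℝ) (1 / 2),
      Ebar ε = -c₁bar ε - ε * Real.log (1 - c₁bar ε / ε)) ∧
    Filter.Tendsto (fun ε => Ebar ε / (ε ^ 3 / 2))
      (nhdsWithin 0 (Set.Ioi 0)) (nhds 1) := by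
  -- notation
  set s : ℝ → ℝ := fun ε => Real.sqrt ((1 - 2 * ε) ^ 2 + 4 * ε ^ 2) with hs_def
  have hs_nonneg : ∀ ε, 0 ≤ s ε := fun ε => Real.sqrt_nonneg _
  have hs_sq : ∀ ε : ℝ, s ε ^ 2 = (1 - 2 * ε) ^ 2 + 4 * ε ^ 2 := fun ε =>
    Real.sq_sqrt (by positivity)
  -- formula for θ
  have hθ2 : ∀ ε ∈ Ioo (0:ℝ) (1/2), θ ε = 2 * ε / (s ε + 1 - 2 * ε) := by
    intro ε hε
    have hden : 0 < s ε + 1 - 2 * ε := by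
      have := hs_nonneg ε; have := hε.2; linarith
    have hεne : ε ≠ 0 := ne_of_gt hε.1
    rw [hθ ε]
    have hsε : Real.sqrt ((1 - 2*ε)^2 + 4*ε^2) = s ε := rfl
    rw [hsε, eq_div_iff hden.ne']
    have key := hs_sq ε
    field_simp
    linear_combination key
  -- part 1
  have part1 : ∀ ε ∈ Set.Ioo (0 : ℝ) (1 / 2),
      Ebar ε = -c₁bar ε - ε * Real.log (1 - c₁bar ε / ε) := by
    intro ε hε
    have hεne : ε ≠ 0 := ne_of_gt hε.1
    rw [hE, hv, hw]
    have harg : ε * (ε - c₁bar ε) / ε ^ 2 = 1 - c₁bar ε / ε := by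
      field_simp
    rw [harg]; ring
  refine ⟨part1, ?_⟩
  -- limit of s
  have hs_lim : Filter.Tendsto s (𝓝[>] (0:ℝ)) (𝓝 1) := by
    have hc : Continuous s := by
      apply Real.continuous_sqrt.comp; continuity
    have := (hc.tendsto 0).mono_left (nhdsWithin_le_nhds (s := Set.Ioi (0:ℝ)))
    simpa [hs_def] using this
  -- limit of denominator
  have hden_lim : Filter.Tendsto (fun ε => s ε + 1 - 2 * ε) (𝓝[>] (0:ℝ)) (𝓝 2) := by
    have h2 : Filter.Tendsto (fun ε : ℝ => 2 * ε) (𝓝[>] (0:ℝ)) (𝓝 0) := by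
      have hcont : Continuous (fun ε : ℝ => 2 * ε) := by continuity
      have := (hcont.tendsto 0).mono_left (nhdsWithin_le_nhds (s := Set.Ioi (0:ℝ)))
      simpa using this
    have h1 : Filter.Tendsto (fun ε => s ε + 1) (𝓝[>] (0:ℝ)) (𝓝 2) := by
      have := hs_lim.add (tendsto_const_nhds :
        Filter.Tendsto (fun _ : ℝ => (1:ℝ)) (𝓝[>] (0:ℝ)) (𝓝 1))
      norm_num at this; exact this
    have h3 := h1.sub h2
    norm_num at h3
    exact h3
  -- θ/ε → 1
  have hratio : Filter.Tendsto (fun ε => θ ε / ε) (𝓝[>] (0:ℝ)) (𝓝 1) := by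
    have hev : ∀ᶠ ε in 𝓝[>] (0:ℝ), 2 / (s ε + 1 - 2 * ε) = θ ε / ε := by
      filter_upwards [Ioo_mem_nhdsGT_of_mem (by norm_num : (0:ℝ) ∈ Ico (0:ℝ) (1/2))]
        with ε hε
      have hden : 0 < s ε + 1 - 2 * ε := by
        have := hs_nonneg ε; have := hε.2; linarith
      have hεne : ε ≠ 0 := ne_of_gt hε.1
      rw [hθ2 ε hε, div_div]
      rw [mul_comm (s ε + 1 - 2 * ε) ε, mul_comm 2 ε, mul_div_mul_left _ _ hεne]
    have hlim : Filter.Tendsto (fun ε => 2 / (s ε + 1 - 2 * ε)) (𝓝[>] (0:ℝ)) (𝓝 1) := by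
      have := Filter.Tendsto.div (tendsto_const_nhds (x := (2:ℝ))) hden_lim (by norm_num)
      norm_num at this; exact this
    exact hlim.congr' hev
  -- θ → 0 within Ioi 0
  have hθ0 : Filter.Tendsto θ (𝓝[>] (0:ℝ)) (𝓝[>] (0:ℝ)) := by
    rw [tendsto_nhdsWithin_iff]
    constructor
    · have hε0 : Filter.Tendsto (fun ε : ℝ => ε) (𝓝[>] (0:ℝ)) (𝓝 0) := by
        exact tendsto_id.mono_left (nhdsWithin_le_nhds (s := Set.Ioi (0:ℝ)))
      have := hratio.mul hε0
      rw [mul_zero] at this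
      apply this.congr'
      filter_upwards [self_mem_nhdsWithin] with ε hε
      have : ε ≠ 0 := ne_of_gt hε
      field_simp
    · filter_upwards [Ioo_mem_nhdsGT_of_mem (by norm_num : (0:ℝ) ∈ Ico (0:ℝ) (1/2))]
        with ε hε
      rw [hθ2 ε hε]
      have hden : 0 < s ε + 1 - 2 * ε := by
        have := hs_nonneg ε; have := hε.2; linarith
      exact Set.mem_Ioi.mpr (div_pos (by linarith [hε.1]) hden)
  -- conclude
  have hmain := (key_lhopital.comp hθ0).mul (hratio.pow 2)
  norm_num at hmain
  apply hmain.congr'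
  filter_upwards [Ioo_mem_nhdsGT_of_mem (by norm_num : (0:ℝ) ∈ Ico (0:ℝ) (1/2)),
    hθ0.eventually self_mem_nhdsWithin] with ε hε hθpos
  have hεne : ε ≠ 0 := ne_of_gt hε.1
  have hθne : θ ε ≠ 0 := ne_of_gt hθpos
  have hEb : Ebar ε = ε * (-θ ε - Real.log (1 - θ ε)) := by
    rw [part1 ε hε, hc₁]
    have hq : ε * θ ε / ε = θ ε := by field_simp
    rw [hq]; ring
  show ((fun t : ℝ => (-t - Real.log (1 - t)) / (t ^ 2 / 2)) (θ ε)) * (θ ε / ε) ^ 2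
      = Ebar ε / (ε ^ 3 / 2)
  rw [hEb]
  field_simp
end

section
/- With E = 1, the unique v₀ = v₀(ε) > ε solving 2(v₀ - ε) - 2ε·log(v₀/ε) = 1 satisfies the asymptotic expansion v₀(ε) = 1/2 + ε·log(1/ε) + ε·(1 - log 2) + O(ε²·log ε) as ε → 0⁺. -/
open scoped Topology

/-- Asymptotic expansion of the energy-1 diagonal starting point:
`v₀(ε) = 1/2 + ε log(1/ε) + ε(1 - log 2) + O(ε² log ε)` as `ε → 0⁺`. -/
theorem stmt11
    (v₀ : ℝ → ℝ)
    (hv₀ : ∀ ε : ℝ, 0 < ε →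
      ε < v₀ ε ∧ 2 * (v₀ ε - ε) - 2 * ε * Real.log (v₀ ε / ε) = 1) :
    (fun ε : ℝ =>
        v₀ ε - (1 / 2 + ε * Real.log (1 / ε) + ε * (1 - Real.log 2)))
      =O[nhdsWithin 0 (Set.Ioi 0)] (fun ε : ℝ => ε ^ 2 * Real.log ε) := by
  rw [Asymptotics.isBigO_iff]
  refine ⟨4, ?_⟩
  filter_upwards [Ioo_mem_nhdsGT_of_mem
    (show (0:ℝ) ∈ Set.Ico 0 (1/100) by norm_num)] with ε hε
  obtain ⟨hε0, hε1⟩ := hε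
  obtain ⟨hv, heq⟩ := hv₀ ε hε0
  set v := v₀ ε with hvdef
  have hvpos : 0 < v := lt_trans hε0 hv
  have hlogdiv : Real.log (v / ε) = Real.log v - Real.log ε :=
    Real.log_div (ne_of_gt hvpos) (ne_of_gt hε0)
  have hkey : v = 1/2 + ε + ε * Real.log (v/ε) := by linarith
  have hlogpos : 0 < Real.log (v/ε) :=
    Real.log_pos (by rw [lt_div_iff₀ hε0]; linarith)
  have hvhalf : 1/2 < v := by nlinarith
  -- sqrt ε ≤ 1/10
  have hsε : Real.sqrt ε ≤ 1/10 := by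
    rw [show (1/10:ℝ) = Real.sqrt (1/100) by
      rw [show (1/100:ℝ) = (1/10)^2 by norm_num, Real.sqrt_sq (by norm_num : (0:ℝ) ≤ 1/10)]]
    exact Real.sqrt_le_sqrt (le_of_lt hε1)
  have hsεpos : 0 < Real.sqrt ε := Real.sqrt_pos.mpr hε0
  -- log(v/ε) ≤ 2 * sqrt(v/ε)
  have hlogsqrt : Real.log (v/ε) ≤ 2 * Real.sqrt (v/ε) := by
    have h1 : Real.log (Real.sqrt (v/ε)) ≤ Real.sqrt (v/ε) - 1 :=
      Real.log_le_sub_one_of_pos (Real.sqrt_pos.mpr (div_pos hvpos hε0))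
    have h2 : Real.log (Real.sqrt (v/ε)) = Real.log (v/ε) / 2 :=
      Real.log_sqrt (le_of_lt (div_pos hvpos hε0))
    linarith
  have hεsq : Real.sqrt ε * Real.sqrt ε = ε := Real.mul_self_sqrt hε0.le
  have hsqrtdiv : ε * Real.sqrt (v/ε) = Real.sqrt ε * Real.sqrt v := by
    rw [Real.sqrt_div hvpos.le, ← mul_div_assoc, div_eq_iff hsεpos.ne']
    linear_combination (-Real.sqrt v) * hεsq
  have hv1 : v ≤ 1 := by
    by_contra h
    push_neg at h
    have hsv : Real.sqrt v ≤ v := by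
      have h2 : Real.sqrt v ≤ Real.sqrt (v^2) := Real.sqrt_le_sqrt (by nlinarith)
      rwa [Real.sqrt_sq (by linarith)] at h2
    have : ε * Real.log (v/ε) ≤ 2 * (Real.sqrt ε * Real.sqrt v) := by
      rw [← hsqrtdiv]; nlinarith
    nlinarith [Real.sqrt_nonneg v]
  -- main identity
  have hD : v - (1/2 + ε * Real.log (1/ε) + ε * (1 - Real.log 2))
      = ε * Real.log (2*v) := by
    have hloginv : Real.log (1/ε) = -Real.log ε := by rw [one_div, Real.log_inv]
    rw [hloginv, Real.log_mul (by norm_num) (ne_of_gt hvpos)]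
    rw [hlogdiv] at hkey
    linear_combination hkey
  have hlog2v0 : 0 ≤ Real.log (2*v) := Real.log_nonneg (by linarith)
  have hlogv0 : Real.log v ≤ 0 := Real.log_nonpos (le_of_lt hvpos) hv1
  have hlogε : Real.log ε < -1 := by
    have h1 : Real.log ε < Real.log (1/100) := Real.log_lt_log hε0 hε1
    have h2 : Real.log (1/100) < -1 := by
      have h3 : Real.exp 1 < 3 := lt_trans Real.exp_one_lt_d9 (by norm_num)
      have h5 : (1:ℝ) < Real.log 100 := by
        have := Real.log_lt_log (Real.exp_pos 1) (by linarith : Real.exp 1 < 100)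
        rwa [Real.log_exp] at this
      have h6 : Real.log ((1:ℝ)/100) = -Real.log 100 := by
        rw [one_div, Real.log_inv]
      linarith
    linarith
  have hlog2v : Real.log (2*v) ≤ 2*ε*(1 - Real.log ε) := by
    have h1 : Real.log (2*v) ≤ 2*v - 1 := by
      have := Real.log_le_sub_one_of_pos (by linarith : 0 < 2*v)
      linarith
    rw [hlogdiv] at hkey
    nlinarith
  rw [hD, Real.norm_eq_abs, Real.norm_eq_abs,
    abs_of_nonneg (by positivity : (0:ℝ) ≤ ε * Real.log (2*v)),
    abs_of_nonpos (by nlinarith : ε^2 * Real.log ε ≤ 0)]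
  nlinarith
end

section
/- The implicit ODE system dℓ/ds = A·e/ℓ, de/ds = -A·e/ℓ with ℓ(0) = 0, e(0) = 1 (A > 0) has the conserved quantity ℓ + e = 1, its solution satisfies the implicit relation -(1/A)·ℓ - (1/A)·log(1 - ℓ) = s, and asymptotically ℓ(s) ~ √(2As) as s → 0⁺ while e(s) ~ e^{-1}·e^{-As} and ℓ(s) ~ 1 - e^{-1}·e^{-As} as s → ∞. -/
open scoped Topology
open Filter Set

private lemma const_aux (g : ℝ → ℝ) (hc : ContinuousOn g (Set.Ici 0))
    (hd : ∀ s : ℝ, 0 < s → HasDerivAt g 0 s) :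
    ∀ s : ℝ, 0 ≤ s → g s = g 0 := by
  intro s hs
  rcases hs.eq_or_lt with h | h
  · rw [← h]
  have key : ∀ t ∈ Set.Ioc (0:ℝ) s, g s = g t := by
    intro t ht
    exact constant_of_has_deriv_right_zero
      (hc.mono (fun x hx => le_trans ht.1.le hx.1))
      (fun x hx => ((hd x (lt_of_lt_of_le ht.1 hx.1)).hasDerivWithinAt))
      s (Set.right_mem_Icc.mpr ht.2)
  have h1 : Filter.Tendsto g (𝓝[>] (0:ℝ)) (𝓝 (g 0)) :=
    ((hc 0 Set.self_mem_Ici).tendsto).mono_left (nhdsWithin_mono 0 Set.Ioi_subset_Ici_self)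
  have h2 : ∀ᶠ t in 𝓝[>] (0:ℝ), g t = g s := by
    filter_upwards [Ioc_mem_nhdsGT_of_mem (Set.left_mem_Ico.mpr h)] with t ht
    exact (key t ht).symm
  have h3 : Filter.Tendsto g (𝓝[>] (0:ℝ)) (𝓝 (g s)) :=
    Filter.Tendsto.congr' (h2.mono fun t ht => ht.symm) tendsto_const_nhds
  exact tendsto_nhds_unique h3 h1

/-- Properties of the Phase-II length/energy system `ℓ' = Ae/ℓ`, `e' = -Ae/ℓ`
with `ℓ(0) = 0`, `e(0) = 1`: conservation `ℓ + e = 1`, the implicit solution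
formula, and the asymptotics at `s → 0⁺` and `s → ∞`. -/
theorem stmt16
    (A : ℝ) (hA : 0 < A)
    (ℓ e : ℝ → ℝ)
    (hcont : ContinuousOn ℓ (Set.Ici 0)) (hcont' : ContinuousOn e (Set.Ici 0))
    (hℓ0 : ℓ 0 = 0) (he0 : e 0 = 1)
    (hpos : ∀ s : ℝ, 0 < s → 0 < ℓ s ∧ 0 < e s ∧ ℓ s < 1)
    (hdℓ : ∀ s : ℝ, 0 < s → HasDerivAt ℓ (A * e s / ℓ s) s)
    (hde : ∀ s : ℝ, 0 < s → HasDerivAt e (-(A * e s / ℓ s)) s) :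
    (∀ s : ℝ, 0 ≤ s → ℓ s + e s = 1) ∧
    (∀ s : ℝ, 0 < s → -(1 / A) * ℓ s - (1 / A) * Real.log (1 - ℓ s) = s) ∧
    Filter.Tendsto (fun s => ℓ s / Real.sqrt (2 * A * s))
      (nhdsWithin 0 (Set.Ioi 0)) (nhds 1) ∧
    Filter.Tendsto (fun s => e s / (Real.exp (-1) * Real.exp (-A * s)))
      Filter.atTop (nhds 1) ∧
    Filter.Tendsto (fun s => ℓ s / (1 - Real.exp (-1) * Real.exp (-A * s)))
      Filter.atTop (nhds 1) := by
  -- Part 1: conservation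
  have hcons : ∀ s : ℝ, 0 ≤ s → ℓ s + e s = 1 := by
    have h := const_aux (fun s => ℓ s + e s) (hcont.add hcont')
      (fun s hs => by have h := (hdℓ s hs).add (hde s hs); rwa [add_neg_cancel] at h)
    intro s hs
    simpa [hℓ0, he0] using h s hs
  have h1ℓpos : ∀ s ∈ Set.Ici (0:ℝ), (0:ℝ) < 1 - ℓ s := by
    intro s hs
    rcases eq_or_lt_of_le (Set.mem_Ici.mp hs) with h | h
    · simp [← h, hℓ0]
    · linarith [(hpos s h).2.2]
  -- Part 2: implicit formula
  have himp : ∀ s : ℝ, 0 < s → -(1 / A) * ℓ s - (1 / A) * Real.log (1 - ℓ s) = s := by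
    have hGc : ContinuousOn
        (fun s => -(1/A) * ℓ s - (1/A) * Real.log (1 - ℓ s) - s) (Set.Ici 0) :=
      ((continuousOn_const.mul hcont).sub (continuousOn_const.mul
        ((continuousOn_const.sub hcont).log (fun s hs => (h1ℓpos s hs).ne')))).sub
        continuousOn_id
    have hGd : ∀ s : ℝ, 0 < s →
        HasDerivAt (fun s => -(1/A) * ℓ s - (1/A) * Real.log (1 - ℓ s) - s) 0 s := by
      intro s hs
      have hx : 0 < ℓ s := (hpos s hs).1
      have h1x : (0:ℝ) < 1 - ℓ s := h1ℓpos s hs.le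
      have he : e s = 1 - ℓ s := by have := hcons s hs.le; linarith
      have hlog : HasDerivAt (fun t => Real.log (1 - ℓ t))
          (-(A * e s / ℓ s) / (1 - ℓ s)) s := by
        have := ((hdℓ s hs).const_sub 1).log h1x.ne'
        simpa using this
      have hd : HasDerivAt (fun s => -(1/A) * ℓ s - (1/A) * Real.log (1 - ℓ s) - s)
          (-(1/A) * (A * e s / ℓ s) - (1/A) * (-(A * e s / ℓ s) / (1 - ℓ s)) - 1) s :=
        (((hdℓ s hs).const_mul (-(1/A))).sub (hlog.const_mul (1/A))).sub (hasDerivAt_id s)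
      have heq : -(1/A) * (A * e s / ℓ s) - (1/A) * (-(A * e s / ℓ s) / (1 - ℓ s)) - 1 = 0 := by
        rw [he]; field_simp; ring
      rwa [heq] at hd
    intro s hs
    have h := const_aux _ hGc hGd s hs.le
    simp only [hℓ0, sub_zero, Real.log_one, mul_zero] at h
    linarith
  -- helpers for asymptotics
  have hl0 : Tendsto ℓ (𝓝[>] (0:ℝ)) (𝓝 0) := by
    have := (hcont 0 Set.self_mem_Ici).tendsto
    rw [hℓ0] at this
    exact this.mono_left (nhdsWithin_mono 0 Set.Ioi_subset_Ici_self)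
  have hmul : ∀ s : ℝ, 0 < s → ℓ s + Real.log (1 - ℓ s) = -(A*s) := by
    intro s hs
    have h2 := himp s hs
    have h3 : A * (-(1/A) * ℓ s - (1/A) * Real.log (1 - ℓ s)) = A * s := by rw [h2]
    have h4 : A * (-(1/A) * ℓ s - (1/A) * Real.log (1 - ℓ s))
        = -(ℓ s) - Real.log (1 - ℓ s) := by
      field_simp
    rw [h4] at h3
    linarith
  -- Part 3
  have hq : Tendsto (fun x : ℝ => -2*(x + Real.log (1-x))/x^2) (𝓝[>] (0:ℝ)) (𝓝 1) := by
    rw [← tendsto_sub_nhds_zero_iff]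
    apply squeeze_zero_norm' (a := fun x : ℝ => 4*x)
    · filter_upwards [Ioo_mem_nhdsGT_of_mem (Set.left_mem_Ico.mpr (by norm_num : (0:ℝ) < 1/2))]
        with x hx
      have hx0 : (0:ℝ) < x := hx.1
      have hx2 : x < 1/2 := hx.2
      have h1 : |x| < 1 := by rw [abs_of_pos hx0]; linarith
      have key := Real.abs_log_sub_add_sum_range_le h1 2
      rw [abs_of_pos hx0] at key
      norm_num [Finset.sum_range_succ] at key
      -- key : |x + x ^ 2 / 2 + Real.log (1 - x)| ≤ x ^ 3 / (1 - x)
      have hb : |x + x ^ 2 / 2 + Real.log (1-x)| ≤ 2 * x^3 := by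
        refine key.trans ?_
        rw [div_le_iff₀ (by linarith)]
        nlinarith [pow_pos hx0 3]
      have e1 : -2*(x + Real.log (1-x))/x^2 - 1
          = (-2) * (x + x ^ 2 / 2 + Real.log (1-x)) / x^2 := by
        field_simp
        ring
      rw [Real.norm_eq_abs, e1, abs_div, abs_mul, abs_neg, abs_two,
        abs_of_pos (pow_pos hx0 2), div_le_iff₀ (pow_pos hx0 2)]
      nlinarith [abs_nonneg (x + x ^ 2 / 2 + Real.log (1-x))]
    · have : Tendsto (fun x : ℝ => 4*x) (𝓝 (0:ℝ)) (𝓝 (4*0)) :=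
        (tendsto_const_nhds.mul tendsto_id)
      simpa using this.mono_left nhdsWithin_le_nhds
  have hinner : Tendsto (fun x : ℝ => x / Real.sqrt (-2*(x + Real.log (1-x))))
      (𝓝[>] (0:ℝ)) (𝓝 1) := by
    have hsq : Tendsto (fun x : ℝ => Real.sqrt (-2*(x + Real.log (1-x))/x^2))
        (𝓝[>] (0:ℝ)) (𝓝 1) := by
      have := (Real.continuous_sqrt.tendsto 1).comp hq
      simpa [Function.comp_def] using this
    have hinv : Tendsto (fun x : ℝ => 1 / Real.sqrt (-2*(x + Real.log (1-x))/x^2))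
        (𝓝[>] (0:ℝ)) (𝓝 1) := by
      simpa using hsq.inv₀ one_ne_zero
    apply hinv.congr'
    filter_upwards [self_mem_nhdsWithin] with x hx
    have hx0 : (0:ℝ) < x := hx
    have h2 : -2*(x + Real.log (1-x)) = x^2 * (-2*(x + Real.log (1-x))/x^2) := by
      field_simp
    conv_rhs => rw [h2]
    rw [Real.sqrt_mul (sq_nonneg x), Real.sqrt_sq hx0.le,
      div_mul_eq_div_div, div_self hx0.ne']
  have hℓmem : Tendsto ℓ (𝓝[>] (0:ℝ)) (𝓝[>] (0:ℝ)) := by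
    rw [tendsto_nhdsWithin_iff]
    refine ⟨hl0, ?_⟩
    filter_upwards [self_mem_nhdsWithin] with s hs
    exact (hpos s hs).1
  have t3 : Tendsto (fun s => ℓ s / Real.sqrt (2*A*s)) (𝓝[>] (0:ℝ)) (𝓝 1) := by
    have hcomp := hinner.comp hℓmem
    apply hcomp.congr'
    filter_upwards [self_mem_nhdsWithin] with s hs
    have hAs : 2*A*s = -2*(ℓ s + Real.log (1 - ℓ s)) := by
      have := hmul s hs
      linarith
    simp only [Function.comp_apply]
    rw [hAs]
  -- Part 4
  have hloge : ∀ s : ℝ, 0 < s → e s = Real.exp (-(A*s) - ℓ s) := by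
    intro s hs
    have he1 : (1:ℝ) - ℓ s = e s := by have := hcons s hs.le; linarith
    have hepos : 0 < e s := (hpos s hs).2.1
    have h3 := hmul s hs
    rw [he1] at h3
    have hlog : Real.log (e s) = -(A*s) - ℓ s := by linarith
    rw [← hlog, Real.exp_log hepos]
  have he_to0 : Tendsto e atTop (𝓝 (0:ℝ)) := by
    have hup : Tendsto (fun s : ℝ => Real.exp (-(A*s))) atTop (𝓝 0) := by
      have h1 : Tendsto (fun s : ℝ => -(A*s)) atTop atBot := by
        apply Filter.tendsto_neg_atBot_iff.mpr
        exact tendsto_id.const_mul_atTop hA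
      exact Real.tendsto_exp_atBot.comp h1
    apply tendsto_of_tendsto_of_tendsto_of_le_of_le' tendsto_const_nhds hup
    · filter_upwards [eventually_gt_atTop (0:ℝ)] with s hs
      exact (hpos s hs).2.1.le
    · filter_upwards [eventually_gt_atTop (0:ℝ)] with s hs
      rw [hloge s hs]
      apply Real.exp_le_exp.mpr
      have := (hpos s hs).1
      linarith
  have t4 : Tendsto (fun s => e s / (Real.exp (-1) * Real.exp (-A*s))) atTop (𝓝 1) := by
    have hexp : Tendsto (fun s => Real.exp (e s)) atTop (𝓝 1) := by
      have := (Real.continuous_exp.tendsto 0).comp he_to0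
      simpa [Function.comp_def] using this
    apply hexp.congr'
    filter_upwards [eventually_gt_atTop (0:ℝ)] with s hs
    have h5 : e s = Real.exp (e s - 1 - A*s) := by
      conv_lhs => rw [hloge s hs]
      congr 1
      have := hcons s hs.le
      linarith
    rw [eq_div_iff (by positivity)]
    rw [← Real.exp_add, ← Real.exp_add]
    conv_rhs => rw [h5]
    congr 1
    ring
  -- Part 5
  have hAs0 : Tendsto (fun s : ℝ => Real.exp (-A*s)) atTop (𝓝 0) := by
    have h1 : Tendsto (fun s : ℝ => -(A*s)) atTop atBot := by
      apply Filter.tendsto_neg_atBot_iff.mpr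
      exact tendsto_id.const_mul_atTop hA
    simpa only [neg_mul, Function.comp_def] using Real.tendsto_exp_atBot.comp h1
  have hden : Tendsto (fun s : ℝ => 1 - Real.exp (-1) * Real.exp (-A*s)) atTop (𝓝 1) := by
    have h := (tendsto_const_nhds (x := Real.exp (-1)) (f := (atTop : Filter ℝ))).mul hAs0
    have h2 := (tendsto_const_nhds (x := (1:ℝ)) (f := (atTop : Filter ℝ))).sub h
    simpa using h2
  have hnum : Tendsto ℓ atTop (𝓝 1) := by
    have h := tendsto_const_nhds (x := (1:ℝ)) (f := atTop) |>.sub he_to0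
    rw [sub_zero] at h
    apply h.congr'
    filter_upwards [eventually_ge_atTop (0:ℝ)] with s hs
    have := hcons s hs
    linarith
  have t5 : Tendsto (fun s => ℓ s / (1 - Real.exp (-1) * Real.exp (-A*s))) atTop (𝓝 1) := by
    have := hnum.div hden one_ne_zero
    rw [div_one] at this; exact this
  exact ⟨hcons, himp, t3, t4, t5⟩
end
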